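/- In the Melikian algebra M over a field of characteristic 5, the squaring cocycle of the inner derivation ad(D̃_i) satisfies Sq(D̃_i)(x_iD_j, x_iD̃_j) = D_i for i ≠ j. -/

import Mathlib

open scoped BigOperators

namespace Melikian

/-- Index set for monomials in the truncated polynomial algebra
`A(2) = F[x₁,x₂]/(x₁⁵,x₂⁵)`. -/
abbrev Idx : Type := Fin 5 × Fin 5

/-- The truncated polynomial algebra `A(2)`, as functions on monomial exponents. -/
abbrev A (F : Type*) [Field F] : Type _ := Idx → F

variable {F : Type*} [Field F]

/-- The monomial `x^b = x₁^{b₁} x₂^{b₂}`. -/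
def X (b : Idx) : A F := fun a => if a = b then 1 else 0

/-- Truncated multiplication of `A(2)`. -/
def mulA (f g : A F) : A F := fun a =>
  ∑ b : Idx, ∑ c : Idx,
    if b.1.val + c.1.val = a.1.val ∧ b.2.val + c.2.val = a.2.val then f b * g c else 0

/-- Partial derivative `∂/∂x₁` on `A(2)`. -/
def d1 (f : A F) : A F := fun a =>
  if h : a.1.val + 1 < 5 then ((a.1.val + 1 : ℕ) : F) * f (⟨a.1.val + 1, h⟩, a.2) else 0

/-- Partial derivative `∂/∂x₂` on `A(2)`. -/
def d2 (f : A F) : A F := fun a =>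
  if h : a.2.val + 1 < 5 then ((a.2.val + 1 : ℕ) : F) * f (a.1, ⟨a.2.val + 1, h⟩) else 0

/-- The Witt–Jacobson algebra `W(2)` as a free `A(2)`-module with basis `D₁, D₂`:
an element `(f₁, f₂)` stands for `f₁D₁ + f₂D₂`. -/
abbrev W (F : Type*) [Field F] : Type _ := A F × A F

/-- Action of a derivation `D = f₁D₁+f₂D₂ ∈ W(2)` on `A(2)`. -/
def Dw (D : W F) (g : A F) : A F := mulA D.1 (d1 g) + mulA D.2 (d2 g)

/-- Divergence `div(f₁D₁+f₂D₂) = D₁(f₁) + D₂(f₂)`. -/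
def divW (D : W F) : A F := d1 D.1 + d2 D.2

/-- The usual bracket of `W(2)`. -/
def brW (D E : W F) : W F := (Dw D E.1 - Dw E D.1, Dw D E.2 - Dw E D.2)

/-- Multiplication of an element of `W(2)` by a truncated polynomial. -/
def smulA (f : A F) (D : W F) : W F := (mulA f D.1, mulA f D.2)

/-- The Melikian algebra `M = A(2) ⊕ W(2) ⊕ W(2)~` as an `F`-vector space. -/
abbrev Mel (F : Type*) [Field F] : Type _ := A F × W F × W F

/-- Inclusion of `A(2)` into `M`. -/
def ιA (f : A F) : Mel F := (f, 0, 0)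

/-- Inclusion of `W(2)` into `M`. -/
def ιW (D : W F) : Mel F := (0, D, 0)

/-- Inclusion of the second copy `W(2)~` into `M`, `D ↦ D̃`. -/
def ιT (D : W F) : Mel F := (0, 0, D)

/-- The Melikian bracket on `M = A(2) ⊕ W(2) ⊕ W(2)~`, defined by the rules
`[D,Ẽ] = [D,E]~ + 2 div(D) Ẽ`, `[D,f] = D(f) − 2 div(D) f`,
`[f₁D̃₁+f₂D̃₂, g₁D̃₁+g₂D̃₂] = f₁g₂ − f₂g₁`, `[f,Ẽ] = fE`,
`[f,g] = 2(gD₂(f) − fD₂(g))D̃₁ + 2(fD₁(g) − gD₁(f))D̃₂`,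
extended bilinearly and antisymmetrically (with the standard bracket on `W(2)`). -/
def brM (u v : Mel F) : Mel F :=
  ( (Dw u.2.1 v.1 - (2 : F) • mulA (divW u.2.1) v.1)
      - (Dw v.2.1 u.1 - (2 : F) • mulA (divW v.2.1) u.1)
      + (mulA u.2.2.1 v.2.2.2 - mulA u.2.2.2 v.2.2.1)
  , brW u.2.1 v.2.1 + smulA u.1 v.2.2 - smulA v.1 u.2.2
  , (brW u.2.1 v.2.2 + (2 : F) • smulA (divW u.2.1) v.2.2)
      - (brW v.2.1 u.2.2 + (2 : F) • smulA (divW v.2.1) u.2.2)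
      + ((2 : F) • (mulA v.1 (d2 u.1) - mulA u.1 (d2 v.1)),
         (2 : F) • (mulA u.1 (d1 v.1) - mulA v.1 (d1 u.1))) )

/-- `x^b D_i` as an element of `W(2)` (`i = 0` stands for `D₁`, `i = 1` for `D₂`). -/
def wOf (i : Fin 2) (b : Idx) : W F := if i = 0 then (X b, 0) else (0, X b)

/-- The element `x₁D₁ ∈ M`. -/
def x1D1 : Mel F := ιW (X (1, 0), 0)

/-- The element `x₂D₂ ∈ M`. -/
def x2D2 : Mel F := ιW (0, X (0, 1))

/-- The element `1 ∈ A(2) ⊂ M`. -/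
def oneM : Mel F := ιA (X (0, 0))

/-- The element `D_{i+1} ∈ W(2) ⊂ M`. -/
def DD (i : Fin 2) : Mel F := ιW (wOf i (0, 0))

/-- The element `D̃_{i+1} ∈ W(2)~ ⊂ M`. -/
def TT (i : Fin 2) : Mel F := ιT (wOf i (0, 0))

/-- Total degree of a monomial exponent. -/
def degA (b : Idx) : ℤ := (b.1.val : ℤ) + (b.2.val : ℤ)

/-- The degree-`d` piece `M_d` of the `ℤ`-grading of the Melikian algebra:
`deg_M(f) = 3 deg(f) − 2` on `A(2)`, `deg_M(x^bD_i) = 3(|b|−1)` on `W(2)`, and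
`deg_M(x^bD̃_i) = 3(|b|−1)+2` on `W(2)~`. -/
def Md (d : ℤ) : Submodule F (Mel F) :=
  Submodule.span F
    ( {m | ∃ b : Idx, m = ιA (X b) ∧ d = 3 * degA b - 2}
      ∪ {m | ∃ b : Idx, ∃ i : Fin 2, m = ιW (wOf i b) ∧ d = 3 * (degA b - 1)}
      ∪ {m | ∃ b : Idx, ∃ i : Fin 2, m = ιT (wOf i b) ∧ d = 3 * (degA b - 1) + 2} )

/-- The part `M_{≥ d}` of the Melikian algebra. -/
def Mge (d : ℤ) : Submodule F (Mel F) := ⨆ e : ℤ, ⨆ _ : d ≤ e, (Md e : Submodule F (Mel F))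

/-- The squaring `Sq(γ)(x,y) = Σ_{k=1}^{4} [γ^k(x), γ^{5−k}(y)] / (k!(5−k)!)`
of an operator `γ` on the Melikian algebra (characteristic 5). -/
def melSq (γ : Mel F → Mel F) (x y : Mel F) : Mel F :=
  ∑ k ∈ Finset.Icc 1 4,
    ((Nat.factorial k * Nat.factorial (5 - k) : ℕ) : F)⁻¹ • brM (γ^[k] x) (γ^[5 - k] y)

/-- The Chevalley–Eilenberg coboundary of a linear 1-cochain of `M` with values in the
adjoint representation. -/
def cob (g : Mel F →ₗ[F] Mel F) (x y : Mel F) : Mel F :=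
  brM x (g y) - brM y (g x) - g (brM x y)


section Aux
variable {F : Type*} [Field F]

lemma mulA_zero_left (g : A F) : mulA 0 g = 0 := by
  funext a; simp [mulA]

lemma mulA_zero_right (f : A F) : mulA f 0 = 0 := by
  funext a; simp [mulA]

lemma mulA_one_left (g : A F) : mulA (X (0,0)) g = g := by
  funext a
  unfold mulA X
  rw [Finset.sum_eq_single ((0,0) : Idx)]
  · rw [Finset.sum_eq_single a]
    · simp
    · intro c _ hc
      rw [if_pos rfl, one_mul, if_neg]
      rintro ⟨h1, h2⟩
      exact hc (Prod.ext (Fin.ext (by simpa using h1)) (Fin.ext (by simpa using h2)))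
    · simp
  · intro b _ hb
    rw [if_neg hb]
    simp
  · simp

lemma mulA_one_right (f : A F) : mulA f (X (0,0)) = f := by
  funext a
  unfold mulA X
  rw [Finset.sum_eq_single a]
  · rw [Finset.sum_eq_single ((0,0) : Idx)]
    · simp
    · intro c _ hc
      rw [if_neg hc, mul_zero, ite_self]
    · simp
  · intro b _ hb
    rw [Finset.sum_eq_single ((0,0) : Idx)]
    · rw [if_pos rfl, mul_one, if_neg]
      rintro ⟨h1, h2⟩
      exact hb (Prod.ext (Fin.ext (by simpa using h1)) (Fin.ext (by simpa using h2)))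
    · intro c _ hc
      rw [if_neg hc, mul_zero, ite_self]
    · simp
  · simp

lemma d1_zero : d1 (0 : A F) = 0 := by funext a; simp [d1]
lemma d2_zero : d2 (0 : A F) = 0 := by funext a; simp [d2]
lemma d1_X00 : d1 (X (0,0) : A F) = 0 := by funext a; fin_cases a <;> simp [d1, X] <;> decide
lemma d2_X00 : d2 (X (0,0) : A F) = 0 := by funext a; fin_cases a <;> simp [d2, X] <;> decide
lemma d1_X10 : d1 (X (1,0) : A F) = X (0,0) := by funext a; fin_cases a <;> simp [d1, X] <;> decide
lemma d2_X10 : d2 (X (1,0) : A F) = 0 := by funext a; fin_cases a <;> simp [d2, X] <;> decide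
lemma d1_X01 : d1 (X (0,1) : A F) = 0 := by funext a; fin_cases a <;> simp [d1, X] <;> decide
lemma d2_X01 : d2 (X (0,1) : A F) = X (0,0) := by funext a; fin_cases a <;> simp [d2, X] <;> decide

lemma d1_neg (f : A F) : d1 (-f) = -d1 f := by
  funext a; simp [d1]; split <;> simp [mul_comm]

lemma d2_neg (f : A F) : d2 (-f) = -d2 f := by
  funext a; simp [d2]; split <;> simp [mul_comm]

lemma mulA_neg_left (f g : A F) : mulA (-f) g = -mulA f g := by
  funext a; simp [mulA, ← Finset.sum_neg_distrib]
  congr 1; funext b; congr 1; funext c; split <;> simp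

lemma mulA_neg_right (f g : A F) : mulA f (-g) = -mulA f g := by
  funext a; simp [mulA, ← Finset.sum_neg_distrib]
  congr 1; funext b; congr 1; funext c; split <;> simp

lemma brM_zero_right (u : Mel F) : brM u 0 = 0 := by
  simp [brM, Dw, brW, smulA, divW, mulA_zero_left, mulA_zero_right, d1_zero, d2_zero,
    Prod.ext_iff]

lemma brM_zero_left (v : Mel F) : brM 0 v = 0 := by
  simp [brM, Dw, brW, smulA, divW, mulA_zero_left, mulA_zero_right, d1_zero, d2_zero,
    Prod.ext_iff]

lemma mulA_one_left' (g : A F) : mulA (X 0) g = g := mulA_one_left g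
lemma mulA_one_right' (f : A F) : mulA f (X 0) = f := mulA_one_right f
lemma d1_X00' : d1 (X 0 : A F) = 0 := d1_X00
lemma d2_X00' : d2 (X 0 : A F) = 0 := d2_X00

attribute [local simp] brM Dw brW smulA divW TT ιA ιW ιT wOf DD oneM
  mulA_zero_left mulA_zero_right mulA_one_left mulA_one_right
  mulA_neg_left mulA_neg_right d1_zero d2_zero d1_neg d2_neg
  d1_X00 d2_X00 mulA_one_left' mulA_one_right' d1_X00' d2_X00' d1_X10 d2_X10 d1_X01 d2_X01

lemma gx1 : brM (TT 0 : Mel F) (ιW (0, X (1,0))) = ιT (0, X (0,0)) := by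
  simp [Prod.ext_iff]

lemma gx2 : brM (TT 0 : Mel F) (ιT (0, X (0,0))) = ιA (X (0,0)) := by
  simp [Prod.ext_iff]

lemma gx3 : brM (TT 0 : Mel F) (ιA (X (0,0))) = ιW (-X (0,0), 0) := by
  simp [Prod.ext_iff]

lemma gx4 : brM (TT 0 : Mel F) (ιW (-X (0,0), 0)) = 0 := by
  simp [Prod.ext_iff]

lemma gy1 : brM (TT 0 : Mel F) (ιT (0, X (1,0))) = ιA (X (1,0)) := by
  simp [Prod.ext_iff]

lemma gy2 : brM (TT 0 : Mel F) (ιA (X (1,0))) = ιW (-X (1,0), 0) := by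
  simp [Prod.ext_iff]

lemma gy3 : brM (TT 0 : Mel F) (ιW (-X (1,0), 0)) = ιT (X (0,0), 0) := by
  simp [Prod.ext_iff]; module

lemma gy4 : brM (TT 0 : Mel F) (ιT (X (0,0), 0)) = 0 := by
  simp [Prod.ext_iff]

lemma b23 : brM (ιA (X (0,0)) : Mel F) (ιT (X (0,0), 0)) = DD 0 := by
  simp [Prod.ext_iff]

lemma b32 : brM (ιW (-X (0,0), 0) : Mel F) (ιW (-X (1,0), 0)) = DD 0 := by
  simp [Prod.ext_iff]

-- second component
lemma hx1 : brM (TT 1 : Mel F) (ιW (X (0,1), 0)) = ιT (X (0,0), 0) := by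
  simp [Prod.ext_iff]

lemma hx2 : brM (TT 1 : Mel F) (ιT (X (0,0), 0)) = ιA (-X (0,0)) := by
  simp [Prod.ext_iff]

lemma hx3 : brM (TT 1 : Mel F) (ιA (-X (0,0))) = ιW (0, X (0,0)) := by
  simp [Prod.ext_iff]

lemma hx4 : brM (TT 1 : Mel F) (ιW (0, X (0,0))) = 0 := by
  simp [Prod.ext_iff]

lemma hy1 : brM (TT 1 : Mel F) (ιT (X (0,1), 0)) = ιA (-X (0,1)) := by
  simp [Prod.ext_iff]

lemma hy2 : brM (TT 1 : Mel F) (ιA (-X (0,1))) = ιW (0, X (0,1)) := by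
  simp [Prod.ext_iff]

lemma hy3 : brM (TT 1 : Mel F) (ιW (0, X (0,1))) = ιT (0, -X (0,0)) := by
  simp [Prod.ext_iff]; module

lemma hy4 : brM (TT 1 : Mel F) (ιT (0, -X (0,0))) = 0 := by
  simp [Prod.ext_iff]

lemma c23 : brM (ιA (-X (0,0)) : Mel F) (ιT (0, -X (0,0))) = DD 1 := by
  simp [Prod.ext_iff]

lemma c32 : brM (ιW (0, X (0,0)) : Mel F) (ιW (0, X (0,1))) = DD 1 := by
  simp [Prod.ext_iff]

end Aux


lemma b23' {F : Type*} [Field F] : brM (ιA (X 0) : Mel F) (ιT (X 0, 0)) = DD 0 := b23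
lemma b32' {F : Type*} [Field F] : brM (ιW (-X 0, 0) : Mel F) (ιW (-X (1,0), 0)) = DD 0 := b32
lemma c23' {F : Type*} [Field F] : brM (ιA (-X 0) : Mel F) (ιT (0, -X 0)) = DD 1 := c23
lemma c32' {F : Type*} [Field F] : brM (ιW (0, X 0) : Mel F) (ιW (0, X (0,1))) = DD 1 := c32

lemma half_add_half (F : Type*) [Field F] [CharP F 5] (w : Mel F) :
    (12 : F)⁻¹ • w + (12 : F)⁻¹ • w = w := by
  have h5 : (5 : F) = 0 := by exact_mod_cast CharP.cast_eq_zero F 5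
  have h12 : (12 : F) = 2 := by linear_combination 2 * h5
  have h2 : (2 : F) ≠ 0 := by
    intro h
    have := (CharP.cast_eq_zero_iff F 5 2).mp (by exact_mod_cast h)
    omega
  rw [h12, ← add_smul]
  have : (2 : F)⁻¹ + (2 : F)⁻¹ = 1 := by field_simp; ring
  rw [this, one_smul]

/-- In the Melikian algebra over a field of characteristic 5, the squaring cocycle of the
inner derivation `ad(D̃_i)` satisfies `Sq(D̃_i)(x_iD_j, x_iD̃_j) = D_i` for `i ≠ j`. -/
theorem melikian_sq_tilde_values (F : Type*) [Field F] [CharP F 5] :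
    melSq (brM (TT 0 : Mel F)) (ιW (0, X (1, 0))) (ιT (0, X (1, 0))) = DD 0 ∧
    melSq (brM (TT 1 : Mel F)) (ιW (X (0, 1), 0)) (ιT (X (0, 1), 0)) = DD 1 := by
  constructor
  · set γ := brM (TT 0 : Mel F) with hγ
    have e1 : γ^[1] (ιW (0, X (1, 0))) = ιT (0, X (0,0)) := by
      rw [Function.iterate_one, hγ, gx1]
    have e2 : γ^[2] (ιW (0, X (1, 0))) = ιA (X (0,0)) := by
      rw [Function.iterate_succ_apply', e1, hγ, gx2]
    have e3 : γ^[3] (ιW (0, X (1, 0))) = ιW (-X (0,0), 0) := by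
      rw [Function.iterate_succ_apply', e2, hγ, gx3]
    have e4 : γ^[4] (ιW (0, X (1, 0))) = 0 := by
      rw [Function.iterate_succ_apply', e3, hγ, gx4]
    have f1 : γ^[1] (ιT (0, X (1, 0))) = ιA (X (1,0)) := by
      rw [Function.iterate_one, hγ, gy1]
    have f2 : γ^[2] (ιT (0, X (1, 0))) = ιW (-X (1,0), 0) := by
      rw [Function.iterate_succ_apply', f1, hγ, gy2]
    have f3 : γ^[3] (ιT (0, X (1, 0))) = ιT (X (0,0), 0) := by
      rw [Function.iterate_succ_apply', f2, hγ, gy3]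
    have f4 : γ^[4] (ιT (0, X (1, 0))) = 0 := by
      rw [Function.iterate_succ_apply', f3, hγ, gy4]
    rw [melSq, show Finset.Icc 1 4 = ({1, 2, 3, 4} : Finset ℕ) from rfl]
    rw [Finset.sum_insert (by decide), Finset.sum_insert (by decide),
      Finset.sum_insert (by decide), Finset.sum_singleton]
    norm_num [e1, e2, e3, e4, f1, f2, f3, f4, Nat.factorial]
    rw [b23, b32, brM_zero_right, brM_zero_left]
    try simp only [smul_zero, zero_add, add_zero]
    exact half_add_half F _
  · set γ := brM (TT 1 : Mel F) with hγ
    have e1 : γ^[1] (ιW (X (0, 1), 0)) = ιT (X (0,0), 0) := by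
      rw [Function.iterate_one, hγ, hx1]
    have e2 : γ^[2] (ιW (X (0, 1), 0)) = ιA (-X (0,0)) := by
      rw [Function.iterate_succ_apply', e1, hγ, hx2]
    have e3 : γ^[3] (ιW (X (0, 1), 0)) = ιW (0, X (0,0)) := by
      rw [Function.iterate_succ_apply', e2, hγ, hx3]
    have e4 : γ^[4] (ιW (X (0, 1), 0)) = 0 := by
      rw [Function.iterate_succ_apply', e3, hγ, hx4]
    have f1 : γ^[1] (ιT (X (0, 1), 0)) = ιA (-X (0,1)) := by
      rw [Function.iterate_one, hγ, hy1]
    have f2 : γ^[2] (ιT (X (0, 1), 0)) = ιW (0, X (0,1)) := by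
      rw [Function.iterate_succ_apply', f1, hγ, hy2]
    have f3 : γ^[3] (ιT (X (0, 1), 0)) = ιT (0, -X (0,0)) := by
      rw [Function.iterate_succ_apply', f2, hγ, hy3]
    have f4 : γ^[4] (ιT (X (0, 1), 0)) = 0 := by
      rw [Function.iterate_succ_apply', f3, hγ, hy4]
    rw [melSq, show Finset.Icc 1 4 = ({1, 2, 3, 4} : Finset ℕ) from rfl]
    rw [Finset.sum_insert (by decide), Finset.sum_insert (by decide),
      Finset.sum_insert (by decide), Finset.sum_singleton]
    norm_num [e1, e2, e3, e4, f1, f2, f3, f4, Nat.factorial]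
    rw [c23, c32, brM_zero_right, brM_zero_left]
    try simp only [smul_zero, zero_add, add_zero]
    exact half_add_half F _

end Melikian
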